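/- arXiv:1712.02412 — 6 statements merged into one kernel-verified Lean document; each statement's English description precedes it below -/
import Mathlib

section
/- Let (θ̂, φ̂) ∈ ℝᵖ × (0,∞) be a minimizer over (θ, φ) ∈ ℝᵖ × (0,∞) of the jointly convex function F(θ, φ) = −(1/2)·log φ + φ·‖y‖₂²/(2n) − (1/n)·yᵀXθ + ‖Xθ‖₂²/(2nφ) + λ·‖θ‖₁, where λ > 0. Then β̂ := θ̂/φ̂ is a minimizer over β ∈ ℝᵖ of the lasso objective L_λ(β) = (1/n)·‖y − Xβ‖₂² + 2λ·‖β‖₁, the value 1/φ̂ equals the minimal value σ̂²_λ = inf_{β ∈ ℝᵖ} L_λ(β), and moreover σ̂²_λ = (1/n)·(‖y‖₂² − ‖Xβ̂‖₂²). -/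
open MeasureTheory ProbabilityTheory Matrix
open scoped ENNReal

noncomputable section

/-- squared Euclidean norm on ℝⁿ -/
def l2sq {n : ℕ} (v : Fin n → ℝ) : ℝ := ∑ i, (v i) ^ 2

/-- ℓ₁ norm on ℝᵖ -/
def l1 {p : ℕ} (b : Fin p → ℝ) : ℝ := ∑ j, |b j|

/-- sup norm on ℝᵖ -/
def linf {p : ℕ} (v : Fin p → ℝ) : ℝ := ⨆ j, |v j|

lemma l2sq_nonneg {n : ℕ} (v : Fin n → ℝ) : 0 ≤ l2sq v :=
  Finset.sum_nonneg fun _ _ => sq_nonneg _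

lemma l1_nonneg {p : ℕ} (v : Fin p → ℝ) : 0 ≤ l1 v :=
  Finset.sum_nonneg fun _ _ => abs_nonneg _

lemma l2sq_smul {n : ℕ} (s : ℝ) (v : Fin n → ℝ) : l2sq (s • v) = s^2 * l2sq v := by
  simp [l2sq, Finset.mul_sum, mul_pow]

lemma l1_smul {p : ℕ} (s : ℝ) (hs : 0 ≤ s) (v : Fin p → ℝ) : l1 (s • v) = s * l1 v := by
  simp [l1, abs_mul, abs_of_nonneg hs, Finset.mul_sum]

lemma l2sq_sub_smul {n : ℕ} (y w : Fin n → ℝ) (s : ℝ) :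
    l2sq (y - s • w) = l2sq y - 2*s*(y ⬝ᵥ w) + s^2 * l2sq w := by
  simp only [l2sq, dotProduct, Pi.sub_apply, Pi.smul_apply, smul_eq_mul]
  rw [Finset.mul_sum, Finset.mul_sum, ← Finset.sum_sub_distrib, ← Finset.sum_add_distrib]
  exact Finset.sum_congr rfl fun i _ => by ring

def Lobj {n p : ℕ} (X : Matrix (Fin n) (Fin p) ℝ) (y : Fin n → ℝ) (lam : ℝ)
    (β : Fin p → ℝ) : ℝ := (1/(n:ℝ)) * l2sq (y - X.mulVec β) + 2*lam * l1 β

lemma Lobj_expand {n p : ℕ} (X : Matrix (Fin n) (Fin p) ℝ) (y : Fin n → ℝ) (lam s : ℝ)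
    (hs : 0 ≤ s) (v : Fin p → ℝ) :
    Lobj X y lam (s • v) = (1/(n:ℝ)) * (l2sq y - 2*s*(y ⬝ᵥ X.mulVec v)
      + s^2 * l2sq (X.mulVec v)) + 2*lam*(s * l1 v) := by
  rw [Lobj, X.mulVec_smul, l2sq_sub_smul, l1_smul _ hs]

lemma key_subst {n p : ℕ} (hn : 0 < n) (X : Matrix (Fin n) (Fin p) ℝ) (y : Fin n → ℝ)
    (lam g : ℝ) (hg : 0 < g) (v : Fin p → ℝ) :
    -(1/2) * Real.log g + g * l2sq y / (2*(n:ℝ)) - (1/(n:ℝ)) * (y ⬝ᵥ X.mulVec (g • v))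
      + l2sq (X.mulVec (g • v)) / (2*(n:ℝ)*g) + lam * l1 (g • v)
    = -(1/2) * Real.log g + (g/2) * Lobj X y lam v := by
  have hn' : (0:ℝ) < (n:ℝ) := Nat.cast_pos.mpr hn
  rw [X.mulVec_smul, dotProduct_smul, l2sq_smul, l1_smul _ hg.le, Lobj]
  rw [show y - X.mulVec v = y - (1:ℝ) • X.mulVec v by rw [one_smul], l2sq_sub_smul]
  simp only [smul_eq_mul]
  field_simp
  ring

lemma quad_zero (a e : ℝ) (ha : 0 ≤ a)
    (h : ∀ s : ℝ, 0 < s → 0 ≤ (s-1)*(e + (s-1)*a)) : e = 0 := by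
  have hden : (0:ℝ) < 1 + a + |e| := by have := abs_nonneg e; linarith
  obtain ⟨t, ht0, hat, het⟩ : ∃ t : ℝ, 0 < t ∧ a*t < 1 ∧ e*t < 1 := by
    refine ⟨1/(1+a+|e|), by positivity, ?_, ?_⟩
    · rw [mul_one_div, div_lt_one hden]; linarith [abs_nonneg e]
    · calc e * (1/(1+a+|e|)) ≤ |e| * (1/(1+a+|e|)) :=
            mul_le_mul_of_nonneg_right (le_abs_self e) (by positivity)
        _ < 1 := by rw [mul_one_div, div_lt_one hden]; linarith
  have hs : 0 < 1 - e*t := by linarith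
  have h2 := h (1 - e*t) hs
  have hrw : (1 - e*t - 1)*(e + (1 - e*t - 1)*a) = -(e^2) * (t*(1 - a*t)) := by ring
  rw [hrw] at h2
  have hpos : 0 < t*(1 - a*t) := mul_pos ht0 (by linarith)
  have he2 : e^2 = 0 := le_antisymm (by nlinarith) (sq_nonneg e)
  exact sq_eq_zero_iff.mp he2

/-- a minimizer of the natural-parameterization penalized likelihood yields
a lasso minimizer, whose optimal value equals `1/φ̂` and `(1/n)(‖y‖² − ‖Xβ̂‖²)`. -/
theorem natural_lasso_equivalence {n p : ℕ} (hn : 0 < n)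
    (X : Matrix (Fin n) (Fin p) ℝ) (y : Fin n → ℝ) (lam : ℝ) (hlam : 0 < lam)
    (θ : Fin p → ℝ) (φ : ℝ) (hφ : 0 < φ)
    (hmin : ∀ (t : Fin p → ℝ) (f : ℝ), 0 < f →
      -(1/2) * Real.log φ + φ * l2sq y / (2*n) - (1/n) * (y ⬝ᵥ X.mulVec θ)
          + l2sq (X.mulVec θ) / (2*n*φ) + lam * l1 θ
        ≤ -(1/2) * Real.log f + f * l2sq y / (2*n) - (1/n) * (y ⬝ᵥ X.mulVec t)
          + l2sq (X.mulVec t) / (2*n*f) + lam * l1 t) :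
    (∀ β : Fin p → ℝ,
      (1/n) * l2sq (y - X.mulVec (φ⁻¹ • θ)) + 2*lam * l1 (φ⁻¹ • θ)
        ≤ (1/n) * l2sq (y - X.mulVec β) + 2*lam * l1 β) ∧
    1/φ = (⨅ β : Fin p → ℝ, (1/n) * l2sq (y - X.mulVec β) + 2*lam * l1 β) ∧
    (⨅ β : Fin p → ℝ, (1/n) * l2sq (y - X.mulVec β) + 2*lam * l1 β)
      = (1/n) * (l2sq y - l2sq (X.mulVec (φ⁻¹ • θ))) := by
  have hn' : (0:ℝ) < (n:ℝ) := Nat.cast_pos.mpr hn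
  set b : Fin p → ℝ := φ⁻¹ • θ with hb
  have hθ : φ • b = θ := by rw [hb, smul_smul, mul_inv_cancel₀ hφ.ne', one_smul]
  -- master inequality
  have master : ∀ (β : Fin p → ℝ) (f : ℝ), 0 < f →
      -(1/2) * Real.log φ + (φ/2) * Lobj X y lam b
        ≤ -(1/2) * Real.log f + (f/2) * Lobj X y lam β := by
    intro β f hf
    have h := hmin (f • β) f hf
    rw [← hθ] at h
    rwa [key_subst hn X y lam φ hφ b, key_subst hn X y lam f hf β] at h
  -- b minimizes Lobj
  have hLmin : ∀ β : Fin p → ℝ, Lobj X y lam b ≤ Lobj X y lam β := by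
    intro β
    have h := master β φ hφ
    have h2 : (φ/2) * Lobj X y lam b ≤ (φ/2) * Lobj X y lam β := by linarith
    exact le_of_mul_le_mul_left h2 (by positivity)
  set c : ℝ := Lobj X y lam b with hc
  have hc0 : 0 ≤ c := by
    rw [hc, Lobj]
    have := l2sq_nonneg (y - X.mulVec b)
    have := l1_nonneg b
    positivity
  have hcpos : 0 < c := by
    rcases hc0.lt_or_eq with h | h
    · exact h
    · exfalso
      have h1 := master b (Real.exp (Real.log φ + 1)) (Real.exp_pos _)
      rw [Real.log_exp, ← hc, ← h] at h1
      simp only [mul_zero] at h1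
      linarith
  have hφc : φ * c = 1 := by
    have h2 := master b c⁻¹ (inv_pos.mpr hcpos)
    rw [Real.log_inv] at h2
    have hinv : c⁻¹/2*c = 1/2 := by
      rw [div_mul_eq_mul_div, inv_mul_cancel₀ hcpos.ne']
    rw [hinv] at h2
    by_contra hne
    have h4 := Real.log_lt_sub_one_of_pos (mul_pos hφ hcpos) hne
    rw [Real.log_mul hφ.ne' hcpos.ne'] at h4
    linarith
  have hIc : 1/φ = c := by
    rw [div_eq_iff hφ.ne']
    linarith [hφc]
  -- infimum equals c
  have hinf : (⨅ β : Fin p → ℝ, (1/(n:ℝ)) * l2sq (y - X.mulVec β) + 2*lam * l1 β) = c := by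
    apply le_antisymm
    · exact ciInf_le ⟨c, by rintro x ⟨β, rfl⟩; exact hLmin β⟩ b
    · exact le_ciInf hLmin
  -- KKT identity via scaling
  set A : ℝ := l2sq (X.mulVec b) with hA
  set Bv : ℝ := y ⬝ᵥ X.mulVec b with hBv
  set C : ℝ := l1 b with hC
  have hcex : c = (1/(n:ℝ)) * (l2sq y - 2*Bv + A) + 2*lam*C := by
    have h1 := Lobj_expand X y lam 1 zero_le_one b
    rw [one_smul] at h1
    rw [hc, h1]; ring
  set a : ℝ := A/(n:ℝ) with ha
  have ha0 : 0 ≤ a := div_nonneg (hA ▸ l2sq_nonneg _) hn'.le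
  set e : ℝ := 2*A/(n:ℝ) - 2*Bv/(n:ℝ) + 2*lam*C with he
  have hq : ∀ s : ℝ, 0 < s → 0 ≤ (s-1)*(e + (s-1)*a) := by
    intro s hs
    have h := hLmin (s • b)
    rw [Lobj_expand X y lam s hs.le b, ← hBv, ← hA, ← hC] at h
    rw [hcex] at h
    have heq : (1/(n:ℝ)) * (l2sq y - 2*s*Bv + s^2 * A) + 2*lam*(s*C)
        - ((1/(n:ℝ)) * (l2sq y - 2*Bv + A) + 2*lam*C) = (s-1)*(e + (s-1)*a) := by
      rw [he, ha]; field_simp; ring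
    rw [← heq]; linarith
  have he0 : e = 0 := quad_zero a e ha0 hq
  rw [he] at he0
  have hg2 : 1/φ = ⨅ β : Fin p → ℝ, (1/(n:ℝ)) * l2sq (y - X.mulVec β) + 2*lam * l1 β := by
    rw [hinf]; exact hIc
  have hg3 : (⨅ β : Fin p → ℝ, (1/(n:ℝ)) * l2sq (y - X.mulVec β) + 2*lam * l1 β)
      = (1/(n:ℝ)) * (l2sq y - A) := by
    rw [hinf, hcex]
    field_simp at he0 ⊢
    linarith
  exact ⟨hLmin, hg2, hg3⟩
end
end

section
/- Suppose y = Xβ* + ε with β* ∈ ℝᵖ and ε ∈ ℝⁿ, and let λ > 0 satisfy λ ≥ (1/n)·‖Xᵀε‖_∞. Then the natural lasso variance estimator σ̂²_λ = inf_{β ∈ ℝᵖ} { (1/n)·‖y − Xβ‖₂² + 2λ·‖β‖₁ } satisfies |σ̂²_λ − (1/n)·‖ε‖₂²| ≤ 2λ·‖β*‖₁. -/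
open MeasureTheory ProbabilityTheory Matrix
open scoped ENNReal

noncomputable section

lemma abs_dot_le {p : ℕ} (c v : Fin p → ℝ) : |∑ j, c j * v j| ≤ linf c * l1 v := by
  calc |∑ j, c j * v j| ≤ ∑ j, |c j * v j| := Finset.abs_sum_le_sum_abs _ _
    _ ≤ ∑ j, linf c * |v j| := by
        apply Finset.sum_le_sum; intro j _
        rw [abs_mul]
        have hle : |c j| ≤ linf c := by
          rw [linf]
          exact le_ciSup (f := fun j => |c j|) (Set.Finite.bddAbove (Set.finite_range _)) j
        exact mul_le_mul_of_nonneg_right hle (abs_nonneg _)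
    _ = linf c * l1 v := by rw [l1, Finset.mul_sum]

lemma l1_sub_le {p : ℕ} (a b : Fin p → ℝ) : l1 (a - b) ≤ l1 a + l1 b := by
  rw [l1, l1, l1, ← Finset.sum_add_distrib]
  exact Finset.sum_le_sum fun j _ => abs_sub (a j) (b j)

lemma dot_swap {n p : ℕ} (X : Matrix (Fin n) (Fin p) ℝ) (ε : Fin n → ℝ) (v : Fin p → ℝ) :
    ∑ i, ε i * (X.mulVec v) i = ∑ j, (Xᵀ.mulVec ε) j * v j := by
  simp only [Matrix.mulVec, dotProduct, Matrix.transpose_apply, Finset.sum_mul,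
    Finset.mul_sum]
  rw [Finset.sum_comm]
  exact Finset.sum_congr rfl fun i _ => Finset.sum_congr rfl fun j _ => by ring

/-- if `λ ≥ ‖Xᵀε‖_∞/n` then the natural lasso variance estimator is within
`2λ‖β*‖₁` of `‖ε‖²/n`. -/
theorem natural_lasso_close_to_oracle {n p : ℕ} (hn : 0 < n)
    (X : Matrix (Fin n) (Fin p) ℝ) (βstar : Fin p → ℝ) (ε : Fin n → ℝ)
    (y : Fin n → ℝ) (hy : y = X.mulVec βstar + ε)
    (lam : ℝ) (hlam : 0 < lam) (hlam2 : (1/n) * linf (Xᵀ.mulVec ε) ≤ lam) :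
    |(⨅ β : Fin p → ℝ, (1/n) * l2sq (y - X.mulVec β) + 2*lam * l1 β)
        - (1/n) * l2sq ε| ≤ 2*lam * l1 βstar := by
  have hn' : (0:ℝ) < n := Nat.cast_pos.mpr hn
  have hninv : (0:ℝ) < 1/n := by positivity
  set c : Fin p → ℝ := Xᵀ.mulVec ε with hc
  -- expansion of the residual
  have hexp : ∀ β : Fin p → ℝ,
      l2sq (y - X.mulVec β)
        = l2sq ε + 2 * (∑ j, c j * (βstar - β) j) + l2sq (X.mulVec (βstar - β)) := by
    intro β
    have hw : y - X.mulVec β = ε + X.mulVec (βstar - β) := by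
      funext i
      simp [hy, Matrix.mulVec_sub]
      ring
    rw [hw, ← dot_swap]
    simp only [l2sq, Pi.add_apply, Finset.mul_sum, ← Finset.sum_add_distrib]
    exact Finset.sum_congr rfl fun i _ => by ring
  -- lower bound on the objective
  have hlow : ∀ β : Fin p → ℝ,
      (1/n) * l2sq ε - 2*lam * l1 βstar
        ≤ (1/n) * l2sq (y - X.mulVec β) + 2*lam * l1 β := by
    intro β
    rw [hexp β]
    set S := ∑ j, c j * (βstar - β) j with hS
    have h2 : (1/n) * |S| ≤ lam * (l1 βstar + l1 β) := by
      calc (1/n) * |S| ≤ (1/n) * (linf c * l1 (βstar - β)) :=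
            mul_le_mul_of_nonneg_left (abs_dot_le c _) hninv.le
        _ = (1/n) * linf c * l1 (βstar - β) := by ring
        _ ≤ lam * l1 (βstar - β) :=
            mul_le_mul_of_nonneg_right hlam2 (l1_nonneg _)
        _ ≤ lam * (l1 βstar + l1 β) :=
            mul_le_mul_of_nonneg_left (l1_sub_le βstar β) hlam.le
    have h3 : -(lam * (l1 βstar + l1 β)) ≤ (1/n) * S := by
      have : -((1/n) * |S|) ≤ (1/n) * S := by
        have := neg_abs_le S
        nlinarith [abs_nonneg S]
      linarith
    have h4 : 0 ≤ (1/n) * l2sq (X.mulVec (βstar - β)) :=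
      mul_nonneg hninv.le (l2sq_nonneg _)
    nlinarith [l1_nonneg β, l1_nonneg βstar]
  -- upper bound: plug in βstar
  have hup : (1/n) * l2sq (y - X.mulVec βstar) + 2*lam * l1 βstar
      = (1/n) * l2sq ε + 2*lam * l1 βstar := by
    have : y - X.mulVec βstar = ε := by rw [hy]; abel
    rw [this]
  have hbdd : BddBelow (Set.range fun β : Fin p → ℝ =>
      (1/n) * l2sq (y - X.mulVec β) + 2*lam * l1 β) := by
    refine ⟨(1/n) * l2sq ε - 2*lam * l1 βstar, ?_⟩
    rintro x ⟨β, rfl⟩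
    exact hlow β
  rw [abs_sub_le_iff]
  constructor
  · have h := ciInf_le hbdd βstar
    rw [hup] at h
    linarith
  · have h := le_ciInf hlow
    linarith
end
end

section
/- Suppose y = Xβ* + ε with β* ∈ ℝᵖ and ε ∈ ℝⁿ, let λ > 0 satisfy λ ≥ (2/n)·‖Xᵀε‖_∞, and let β̂_λ be any minimizer over β ∈ ℝᵖ of the lasso objective (1/n)·‖y − Xβ‖₂² + 2λ·‖β‖₁. Then (1/n)·‖Xβ̂_λ − Xβ*‖₂² + λ·‖β̂_λ‖₁ ≤ 3λ·‖β*‖₁, and consequently the naive estimator σ̂²_naive = (1/n)·‖y − Xβ̂_λ‖₂² satisfies |σ̂²_naive − (1/n)·‖ε‖₂²| ≤ 4λ·‖β*‖₁. -/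
open MeasureTheory ProbabilityTheory Matrix
open scoped ENNReal

noncomputable section

/-- deterministic slow-rate bound for the lasso with λ ≥ (2/n)‖Xᵀε‖_∞, and
the resulting bound for the naive variance estimator. -/
theorem naive_lasso_deterministic_bound {n p : ℕ} (hn : 0 < n)
    (X : Matrix (Fin n) (Fin p) ℝ) (βstar : Fin p → ℝ) (ε : Fin n → ℝ)
    (y : Fin n → ℝ) (hy : y = X.mulVec βstar + ε)
    (lam : ℝ) (hlam : 0 < lam) (hlam2 : (2/n) * linf (Xᵀ.mulVec ε) ≤ lam)
    (βhat : Fin p → ℝ)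
    (hβhat : ∀ β : Fin p → ℝ,
      (1/n) * l2sq (y - X.mulVec βhat) + 2*lam * l1 βhat
        ≤ (1/n) * l2sq (y - X.mulVec β) + 2*lam * l1 β) :
    (1/n) * l2sq (X.mulVec βhat - X.mulVec βstar) + lam * l1 βhat ≤ 3*lam * l1 βstar ∧
    |(1/n) * l2sq (y - X.mulVec βhat) - (1/n) * l2sq ε| ≤ 4*lam * l1 βstar := by

  have hn' : (0:ℝ) < n := by exact_mod_cast hn
  set w : Fin n → ℝ := X.mulVec βhat - X.mulVec βstar with hw
  set S : ℝ := ∑ j, (Xᵀ.mulVec ε) j * (βhat j - βstar j) with hS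
  have hres : y - X.mulVec βhat = ε - w := by
    funext i
    simp only [hy, hw, Pi.sub_apply, Pi.add_apply]
    ring
  have hdot : ∑ i, ε i * w i = S := by
    have h1 : ∑ i, ε i * w i = ε ⬝ᵥ X.mulVec (βhat - βstar) := by
      simp [Matrix.mulVec_sub, dotProduct, hw, mul_sub]
    rw [h1, Matrix.dotProduct_mulVec, ← Matrix.mulVec_transpose]
    simp [dotProduct, hS]
  have hexp : l2sq (ε - w) = l2sq ε - 2 * S + l2sq w := by
    rw [← hdot]
    simp only [l2sq, Pi.sub_apply, Finset.mul_sum, ← Finset.sum_add_distrib,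
      ← Finset.sum_sub_distrib]
    exact Finset.sum_congr rfl (fun i _ => by ring)
  have hA : l2sq (y - X.mulVec βhat) = l2sq ε - 2 * S + l2sq w := by
    rw [hres, hexp]
  have hlinf_nonneg : 0 ≤ linf (Xᵀ.mulVec ε) := Real.iSup_nonneg (fun j => abs_nonneg _)
  have hB : |S| ≤ linf (Xᵀ.mulVec ε) * (∑ j, |βhat j - βstar j|) := by
    calc |S| ≤ ∑ j, |(Xᵀ.mulVec ε) j * (βhat j - βstar j)| :=
          Finset.abs_sum_le_sum_abs _ _
      _ = ∑ j, |(Xᵀ.mulVec ε) j| * |βhat j - βstar j| := by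
          simp [abs_mul]
      _ ≤ ∑ j, linf (Xᵀ.mulVec ε) * |βhat j - βstar j| :=
          Finset.sum_le_sum (fun j _ => mul_le_mul_of_nonneg_right
            (le_ciSup (f := fun j => |(Xᵀ.mulVec ε) j|)
              (Set.Finite.bddAbove (Set.finite_range _)) j) (abs_nonneg _))
      _ = _ := by rw [← Finset.mul_sum]
  have hL : (∑ j, |βhat j - βstar j|) ≤ l1 βhat + l1 βstar := by
    simp only [l1, ← Finset.sum_add_distrib]
    exact Finset.sum_le_sum (fun j _ => abs_sub _ _)
  have hLnn : (0:ℝ) ≤ ∑ j, |βhat j - βstar j| :=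
    Finset.sum_nonneg (fun j _ => abs_nonneg _)
  have hl1hat : 0 ≤ l1 βhat := Finset.sum_nonneg (fun j _ => abs_nonneg _)
  have hl1star : 0 ≤ l1 βstar := Finset.sum_nonneg (fun j _ => abs_nonneg _)
  have hl2w : 0 ≤ l2sq w := Finset.sum_nonneg (fun i _ => sq_nonneg _)
  have hSbound : (2/n) * |S| ≤ lam * (l1 βhat + l1 βstar) := by
    have h1 : (2/n) * |S| ≤ (2/n) * (linf (Xᵀ.mulVec ε) * (∑ j, |βhat j - βstar j|)) :=
      mul_le_mul_of_nonneg_left hB (by positivity)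
    have h2 : (2/n) * (linf (Xᵀ.mulVec ε) * (∑ j, |βhat j - βstar j|))
        ≤ lam * (∑ j, |βhat j - βstar j|) := by
      rw [← mul_assoc]
      exact mul_le_mul_of_nonneg_right hlam2 hLnn
    have h3 : lam * (∑ j, |βhat j - βstar j|) ≤ lam * (l1 βhat + l1 βstar) :=
      mul_le_mul_of_nonneg_left hL hlam.le
    linarith
  have hbasic := hβhat βstar
  have hyst : y - X.mulVec βstar = ε := by
    funext i; simp [hy]
  rw [hyst, hA] at hbasic
  have habsS : S ≤ |S| := le_abs_self S
  have habsS' : -S ≤ |S| := neg_le_abs S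
  have hinv : (0:ℝ) < 1/n := by positivity
  have hmul1 : (1/n)*S ≤ (1/n)*|S| := mul_le_mul_of_nonneg_left habsS hinv.le
  have hmul2 : (1/n)*(-S) ≤ (1/n)*|S| := mul_le_mul_of_nonneg_left habsS' hinv.le
  have hmulw : 0 ≤ (1/n) * l2sq w := mul_nonneg hinv.le hl2w
  have hexpand : (1/(n:ℝ)) * (l2sq ε - 2*S + l2sq w)
      = (1/n)*l2sq ε - 2*((1/n)*S) + (1/n)*l2sq w := by ring
  have hSbound' : 2*((1/(n:ℝ))*|S|) ≤ lam * (l1 βhat + l1 βstar) := by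
    have h : (2/(n:ℝ))*|S| = 2*((1/n)*|S|) := by ring
    linarith [hSbound, h.ge, h.le]
  have hfirst : (1/n) * l2sq w + lam * l1 βhat ≤ 3*lam * l1 βstar := by
    rw [hexpand] at hbasic
    linarith [hbasic, hSbound', hmul1]
  constructor
  · exact hfirst
  · rw [hA, abs_le]
    constructor
    · rw [hexpand]; linarith [hSbound', hmul2, hmulw, hfirst, mul_nonneg hlam.le hl1star]
    · rw [hexpand]; linarith [hSbound', hmul1, hmulw, hfirst]
end
end

section
/- Suppose y = Xβ* + ε with β* ∈ ℝᵖ and ε ∈ ℝⁿ, let σ > 0, and let λ > 0 satisfy λ ≥ (1/(nσ))·‖Xᵀε‖_∞. Then the organic lasso variance estimator σ̌²_λ = inf_{β ∈ ℝᵖ} { (1/n)·‖y − Xβ‖₂² + 2λ·‖β‖₁² } satisfies −2λσ²·(‖β*‖₁/σ + 1/4) ≤ σ̌²_λ − (1/n)·‖ε‖₂² ≤ 2λ·‖β*‖₁². -/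
open MeasureTheory ProbabilityTheory Matrix
open scoped ENNReal

noncomputable section

lemma l2sq_add {n : ℕ} (u w : Fin n → ℝ) :
    l2sq (u + w) = l2sq u + 2 * (u ⬝ᵥ w) + l2sq w := by
  simp only [l2sq, dotProduct, Pi.add_apply, Finset.mul_sum, ← Finset.sum_add_distrib]
  exact Finset.sum_congr rfl fun _ _ => by ring

lemma linf_nonneg {p : ℕ} (v : Fin p → ℝ) : 0 ≤ linf v :=
  Real.iSup_nonneg fun _ => abs_nonneg _

lemma abs_le_linf {p : ℕ} (v : Fin p → ℝ) (j : Fin p) : |v j| ≤ linf v :=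
  le_ciSup (f := fun j => |v j|) (Set.finite_range _).bddAbove j

lemma abs_dotProduct_le_linf_mul_l1 {p : ℕ} (a v : Fin p → ℝ) :
    |a ⬝ᵥ v| ≤ linf a * l1 v := by
  calc |a ⬝ᵥ v| ≤ ∑ j, |a j| * |v j| := by
        simpa only [dotProduct, abs_mul] using
          Finset.abs_sum_le_sum_abs (fun j => a j * v j) Finset.univ
    _ ≤ ∑ j, linf a * |v j| :=
        Finset.sum_le_sum fun j _ => mul_le_mul_of_nonneg_right (abs_le_linf a j) (abs_nonneg _)
    _ = linf a * l1 v := by rw [l1, Finset.mul_sum]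

lemma l2sq_sub_ge {n p : ℕ} (X : Matrix (Fin n) (Fin p) ℝ) (βstar β : Fin p → ℝ)
    (ε : Fin n → ℝ) :
    l2sq ε - 2 * linf (Xᵀ *ᵥ ε) * (l1 βstar + l1 β)
      ≤ l2sq (X *ᵥ βstar + ε - X *ᵥ β) := by
  have hres : X *ᵥ βstar + ε - X *ᵥ β = ε + X *ᵥ (βstar - β) := by
    rw [mulVec_sub]; abel
  have hcross : -(linf (Xᵀ *ᵥ ε) * (l1 βstar + l1 β)) ≤ ε ⬝ᵥ X *ᵥ (βstar - β) := by
    rw [dotProduct_mulVec, ← mulVec_transpose]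
    refine neg_le_of_abs_le ((abs_dotProduct_le_linf_mul_l1 _ _).trans ?_)
    exact mul_le_mul_of_nonneg_left (l1_sub_le _ _) (linf_nonneg _)
  rw [hres, l2sq_add]
  linarith [l2sq_nonneg (X *ᵥ (βstar - β))]

/-- The organic lasso objective `O_λ(β)`. -/
def organicObjective {n p : ℕ} (X : Matrix (Fin n) (Fin p) ℝ) (y : Fin n → ℝ) (lam : ℝ)
    (β : Fin p → ℝ) : ℝ :=
  (1/n) * l2sq (y - X *ᵥ β) + 2*lam * (l1 β)^2

lemma organicObjective_ge {n p : ℕ} (X : Matrix (Fin n) (Fin p) ℝ) (βstar : Fin p → ℝ)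
    (ε : Fin n → ℝ) {σ lam : ℝ} (hσ : σ ≠ 0) (hlam : 0 ≤ lam)
    (hnoise : (1/n) * linf (Xᵀ *ᵥ ε) ≤ lam * σ) (β : Fin p → ℝ) :
    (1/n) * l2sq ε - 2*lam*σ^2 * (l1 βstar / σ + 1/4)
      ≤ organicObjective X (X *ᵥ βstar + ε) lam β := by
  have hfit : (1/n) * l2sq ε - 2 * (lam * σ) * (l1 βstar + l1 β)
      ≤ (1/n) * l2sq (X *ᵥ βstar + ε - X *ᵥ β) := by
    have hs : 0 ≤ l1 βstar + l1 β := add_nonneg (l1_nonneg _) (l1_nonneg _)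
    have h := mul_le_mul_of_nonneg_left (l2sq_sub_ge X βstar β ε)
      (by positivity : (0:ℝ) ≤ 1/n)
    linarith [mul_le_mul_of_nonneg_right hnoise hs]
  have hsquare : 0 ≤ 2*lam * (l1 β - σ/2)^2 := by positivity
  have hσs : lam * σ^2 * (l1 βstar / σ) = lam * σ * l1 βstar := by field_simp
  unfold organicObjective
  linarith

theorem organic_lasso_close_to_oracle_general {n p : ℕ}
    (X : Matrix (Fin n) (Fin p) ℝ) (βstar : Fin p → ℝ) (ε : Fin n → ℝ)
    (y : Fin n → ℝ) (hy : y = X.mulVec βstar + ε)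
    (σ : ℝ) (hσ : 0 < σ)
    (lam : ℝ) (hlam2 : (1/(n*σ)) * linf (Xᵀ.mulVec ε) ≤ lam) :
    -(2*lam*σ^2 * (l1 βstar / σ + 1/4))
        ≤ (⨅ β : Fin p → ℝ, (1/n) * l2sq (y - X.mulVec β) + 2*lam * (l1 β)^2)
            - (1/n) * l2sq ε ∧
    (⨅ β : Fin p → ℝ, (1/n) * l2sq (y - X.mulVec β) + 2*lam * (l1 β)^2)
        - (1/n) * l2sq ε ≤ 2*lam * (l1 βstar)^2 := by
  subst hy
  have hlam : 0 ≤ lam := le_trans (mul_nonneg (by positivity) (linf_nonneg _)) hlam2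
  have hnoise : (1/n) * linf (Xᵀ *ᵥ ε) ≤ lam * σ := by
    have h := mul_le_mul_of_nonneg_right hlam2 hσ.le
    rwa [one_div_mul_eq_div, div_mul_eq_mul_div, mul_div_mul_right _ _ hσ.ne',
      ← one_div_mul_eq_div] at h
  have hlow := organicObjective_ge X βstar ε hσ.ne' hlam hnoise
  have hbdd : BddBelow (Set.range (organicObjective X (X *ᵥ βstar + ε) lam)) :=
    ⟨_, Set.forall_mem_range.2 hlow⟩
  have hat_truth : organicObjective X (X *ᵥ βstar + ε) lam βstar
      = (1/n) * l2sq ε + 2*lam * (l1 βstar)^2 := by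
    simp [organicObjective]
  change _ ≤ (⨅ β, organicObjective X (X *ᵥ βstar + ε) lam β) - _ ∧
    (⨅ β, organicObjective X (X *ᵥ βstar + ε) lam β) - _ ≤ _
  constructor
  · linarith [le_ciInf hlow]
  · linarith [ciInf_le hbdd βstar]

/-- if λ ≥ ‖Xᵀε‖_∞/(nσ), then the organic lasso variance estimator
satisfies a two-sided deterministic bound around ‖ε‖²/n. -/
theorem organic_lasso_close_to_oracle {n p : ℕ} (hn : 0 < n)
    (X : Matrix (Fin n) (Fin p) ℝ) (βstar : Fin p → ℝ) (ε : Fin n → ℝ)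
    (y : Fin n → ℝ) (hy : y = X.mulVec βstar + ε)
    (σ : ℝ) (hσ : 0 < σ)
    (lam : ℝ) (hlam : 0 < lam) (hlam2 : (1/(n*σ)) * linf (Xᵀ.mulVec ε) ≤ lam) :
    -(2*lam*σ^2 * (l1 βstar / σ + 1/4))
        ≤ (⨅ β : Fin p → ℝ, (1/n) * l2sq (y - X.mulVec β) + 2*lam * (l1 β)^2)
            - (1/n) * l2sq ε ∧
    (⨅ β : Fin p → ℝ, (1/n) * l2sq (y - X.mulVec β) + 2*lam * (l1 β)^2)
        - (1/n) * l2sq ε ≤ 2*lam * (l1 βstar)^2 :=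
  organic_lasso_close_to_oracle_general X βstar ε y hy σ hσ lam hlam2
end
end

section
/- Assume each column Xⱼ of X ∈ ℝ^{n×p} satisfies ‖Xⱼ‖₂² = n, and let ε ∈ ℝⁿ be a random vector with independent N(0, σ²) coordinates, σ > 0. Then for every L > 0, Pr[ ‖Xᵀε‖_∞/(nσ) > √((2·log p + 2L)/n) ] ≤ e^{−L}. -/
/-!
Each coordinate `(Xᵀε)ⱼ = ∑ᵢ Xᵢⱼ εᵢ` is a sum of independent centred Gaussians, hence has law
`N(0, nσ²)`. For `Z ~ N(0, v)` and `c ≥ 0` one has `P(Z > c) ≤ ½ exp (-c² / 2v)`: on `(c, ∞)` the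
density of `N(0, v)` is at most `exp (-c² / 2v)` times that of `N(c, v)`, because
`x² ≥ c² + (x - c)²` there, and `N(c, v)` gives mass `½` to `(c, ∞)`. Hence
`P(|Z| > c) ≤ exp (-c² / 2v)`, and a union bound over the `p` coordinates at
`c = nσ √((2 log p + 2L) / n)` gives `p exp (-(log p + L)) ≤ exp (-L)`.
-/

open MeasureTheory ProbabilityTheory Matrix
open scoped ENNReal

noncomputable section

open Real Set
open scoped NNReal

lemma exists_lt_abs_of_lt_linf {p : ℕ} {v : Fin p → ℝ} {c : ℝ} (hc : 0 ≤ c) (h : c < linf v) :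
    ∃ j, c < |v j| := by
  cases isEmpty_or_nonempty (Fin p) with
  | inl _ => simp only [linf, iSup_of_isEmpty] at h; linarith
  | inr _ => exact (lt_ciSup_iff (finite_range _).bddAbove).1 h

lemma natCast_mul_exp_neg_log_add_le (p : ℕ) (L : ℝ) :
    (p : ℝ) * exp (-(log p + L)) ≤ exp (-L) := by
  rcases Nat.eq_zero_or_pos p with rfl | hp
  · simp [(exp_pos _).le]
  · rw [neg_add, exp_add, exp_neg, exp_log (by positivity), mul_inv_cancel_left₀ (by positivity)]

namespace ProbabilityTheory

variable {v : ℝ≥0}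

lemma gaussianReal_Iio_neg (c : ℝ) :
    gaussianReal 0 v (Iio (-c)) = gaussianReal 0 v (Ioi c) := by
  have hneg : (gaussianReal 0 v).map (fun x ↦ -x) = gaussianReal 0 v := by
    rw [gaussianReal_map_neg, neg_zero]
  rw [← hneg, Measure.map_apply measurable_neg measurableSet_Iio, hneg]
  congr 1
  ext x
  simp

lemma gaussianReal_Ioi_zero (hv : v ≠ 0) : gaussianReal 0 v (Ioi 0) = 2⁻¹ := by
  have := nullSingletonClass_gaussianReal (μ := 0) hv
  have htotal : gaussianReal 0 v (Ioi 0) + gaussianReal 0 v (Ioi 0) = 1 := by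
    have h := measure_add_measure_compl (μ := gaussianReal 0 v) (measurableSet_Ioi (a := (0 : ℝ)))
    have hsymm := gaussianReal_Iio_neg (v := v) 0
    rw [neg_zero] at hsymm
    rwa [compl_Ioi, measure_univ, ← measure_congr Iio_ae_eq_Iic, hsymm] at h
  rw [← two_mul, mul_comm] at htotal
  exact ENNReal.eq_inv_of_mul_eq_one_left htotal

lemma gaussianReal_Ioi_self (c : ℝ) : gaussianReal c v (Ioi c) = gaussianReal 0 v (Ioi 0) := by
  rw [← zero_add c, ← gaussianReal_map_add_const,
    Measure.map_apply (measurable_add_const c) measurableSet_Ioi, preimage_add_const_Ioi,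
    zero_add, sub_self]

lemma gaussianPDFReal_le_exp_mul_gaussianPDFReal {c x : ℝ} (hc : 0 ≤ c) (hx : c ≤ x) :
    gaussianPDFReal 0 v x ≤ exp (-(c ^ 2 / (2 * v))) * gaussianPDFReal c v x := by
  have hexp : -x ^ 2 / (2 * v) ≤ -(c ^ 2 / (2 * v)) + -(x - c) ^ 2 / (2 * v) := by
    have h : 0 ≤ (x ^ 2 - c ^ 2 - (x - c) ^ 2) / (2 * v) :=
      div_nonneg (by nlinarith [mul_nonneg hc (sub_nonneg.2 hx)]) (by positivity)
    linarith [show (x ^ 2 - c ^ 2 - (x - c) ^ 2) / (2 * v)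
      = -(c ^ 2 / (2 * v)) + -(x - c) ^ 2 / (2 * v) - -x ^ 2 / (2 * v) by ring]
  simp only [gaussianPDFReal, sub_zero]
  rw [mul_left_comm, ← exp_add]
  gcongr

lemma gaussianReal_Ioi_le (hv : v ≠ 0) {c : ℝ} (hc : 0 ≤ c) :
    gaussianReal 0 v (Ioi c) ≤ ENNReal.ofReal (exp (-(c ^ 2 / (2 * v)))) * 2⁻¹ := by
  calc gaussianReal 0 v (Ioi c) = ∫⁻ x in Ioi c, gaussianPDF 0 v x := gaussianReal_apply 0 hv _
    _ ≤ ∫⁻ x in Ioi c, ENNReal.ofReal (exp (-(c ^ 2 / (2 * v)))) * gaussianPDF c v x := by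
      refine setLIntegral_mono (by fun_prop) fun x hx ↦ ?_
      rw [gaussianPDF, gaussianPDF, ← ENNReal.ofReal_mul (exp_pos _).le]
      exact ENNReal.ofReal_le_ofReal (gaussianPDFReal_le_exp_mul_gaussianPDFReal hc hx.le)
    _ = ENNReal.ofReal (exp (-(c ^ 2 / (2 * v)))) * gaussianReal c v (Ioi c) := by
      rw [lintegral_const_mul _ (measurable_gaussianPDF _ _), gaussianReal_apply c hv]
    _ = ENNReal.ofReal (exp (-(c ^ 2 / (2 * v)))) * 2⁻¹ := by
      rw [gaussianReal_Ioi_self, gaussianReal_Ioi_zero hv]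

lemma gaussianReal_lt_abs_le (hv : v ≠ 0) {c : ℝ} (hc : 0 ≤ c) :
    gaussianReal 0 v {x | c < |x|} ≤ ENNReal.ofReal (exp (-(c ^ 2 / (2 * v)))) := by
  have hunion : {x : ℝ | c < |x|} = Iio (-c) ∪ Ioi c := by
    ext x
    simp only [mem_ofPred_eq, mem_union, mem_Iio, mem_Ioi, lt_abs, lt_neg]
    tauto
  calc gaussianReal 0 v {x | c < |x|}
      ≤ gaussianReal 0 v (Iio (-c)) + gaussianReal 0 v (Ioi c) := hunion ▸ measure_union_le _ _
    _ = 2 * gaussianReal 0 v (Ioi c) := by rw [gaussianReal_Iio_neg, two_mul]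
    _ ≤ 2 * (ENNReal.ofReal (exp (-(c ^ 2 / (2 * v)))) * 2⁻¹) := by
      gcongr; exact gaussianReal_Ioi_le hv hc
    _ = ENNReal.ofReal (exp (-(c ^ 2 / (2 * v)))) := by
      rw [mul_comm, mul_assoc, ENNReal.inv_mul_cancel two_ne_zero ENNReal.ofNat_ne_top, mul_one]

variable {Ω ι : Type*} {mΩ : MeasurableSpace Ω} {P : Measure Ω}

lemma iIndepFun.map_sum_eq_gaussianReal [IsProbabilityMeasure P] {Y : ι → Ω → ℝ}
    (hY : ∀ i, Measurable (Y i)) (hind : iIndepFun Y P) {μ : ι → ℝ} {w : ι → ℝ≥0}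
    (hlaw : ∀ i, P.map (Y i) = gaussianReal (μ i) (w i)) (s : Finset ι) :
    P.map (∑ i ∈ s, Y i) = gaussianReal (∑ i ∈ s, μ i) (∑ i ∈ s, w i) := by
  classical
  induction s using Finset.induction_on with
  | empty => simp [Pi.zero_def]
  | insert k s hks ih =>
    rw [Finset.sum_insert hks, Finset.sum_insert hks, Finset.sum_insert hks, add_comm (Y k),
      add_comm (μ k), add_comm (w k)]
    exact gaussianReal_add_gaussianReal_of_indepFun
      (hind.indepFun_finsetSum_of_notMem hY hks) ih (hlaw k)

lemma iIndepFun.map_sum_mul_eq_gaussianReal [IsProbabilityMeasure P] [Fintype ι] {Y : ι → Ω → ℝ}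
    (hY : ∀ i, Measurable (Y i)) (hind : iIndepFun Y P) {w : ι → ℝ≥0}
    (hlaw : ∀ i, P.map (Y i) = gaussianReal 0 (w i)) (a : ι → ℝ) :
    P.map (fun ω ↦ ∑ i, a i * Y i ω)
      = gaussianReal 0 (∑ i, NNReal.mk (a i ^ 2) (sq_nonneg _) * w i) := by
  have hind' := hind.comp (fun i x ↦ a i * x) fun i ↦ measurable_const_mul (a i)
  have h := hind'.map_sum_eq_gaussianReal
    (fun i ↦ (hY i).const_mul (a i))
    (fun i ↦ (gaussianReal_const_mul ⟨(hY i).aemeasurable, hlaw i⟩ (a i)).map_eq) Finset.univ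
  simpa [Finset.sum_fn] using h

lemma measure_lt_linf_le {p : ℕ} {Y : Ω → Fin p → ℝ} (hY : ∀ j, Measurable fun ω ↦ Y ω j)
    (hv : v ≠ 0) (hlaw : ∀ j, P.map (fun ω ↦ Y ω j) = gaussianReal 0 v) {c : ℝ} (hc : 0 ≤ c) :
    P {ω | c < linf (Y ω)} ≤ p * ENNReal.ofReal (exp (-(c ^ 2 / (2 * v)))) := by
  have hcoord (j : Fin p) : P {ω | c < |Y ω j|} ≤ ENNReal.ofReal (exp (-(c ^ 2 / (2 * v)))) := by
    change P ((fun ω ↦ Y ω j) ⁻¹' {x | c < |x|}) ≤ _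
    rw [← Measure.map_apply (hY j) (measurableSet_lt measurable_const measurable_abs), hlaw j]
    exact gaussianReal_lt_abs_le hv hc
  calc P {ω | c < linf (Y ω)} ≤ P (⋃ j, {ω | c < |Y ω j|}) :=
        measure_mono fun ω hω ↦ mem_iUnion.2 (exists_lt_abs_of_lt_linf hc hω)
    _ ≤ ∑ j, P {ω | c < |Y ω j|} := measure_iUnion_fintype_le _ _
    _ ≤ ∑ _j : Fin p, ENNReal.ofReal (exp (-(c ^ 2 / (2 * v)))) :=
        Finset.sum_le_sum fun j _ ↦ hcoord j
    _ = p * ENNReal.ofReal (exp (-(c ^ 2 / (2 * v)))) := by simp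

end ProbabilityTheory

/-- Gaussian tail bound for ‖Xᵀε‖_∞/(nσ). -/
theorem sup_norm_gaussian_tail {n p : ℕ} (hn : 0 < n)
    (X : Matrix (Fin n) (Fin p) ℝ) (hX : ∀ j, ∑ i, (X i j)^2 = (n : ℝ))
    (σ : ℝ) (hσ : 0 < σ)
    {Ω : Type} [MeasureSpace Ω] [IsProbabilityMeasure (ℙ : Measure Ω)]
    (ε : Ω → Fin n → ℝ)
    (hmeas : ∀ i, Measurable (fun ω => ε ω i))
    (hgauss : ∀ i, Measure.map (fun ω => ε ω i) ℙ = gaussianReal 0 ⟨σ^2, sq_nonneg σ⟩)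
    (hindep : iIndepFun (fun i ω => ε ω i) ℙ)
    (L : ℝ) (hL : 0 < L) :
    ℙ {ω | Real.sqrt ((2*Real.log p + 2*L)/n) < linf (Xᵀ.mulVec (ε ω)) / (n*σ)}
      ≤ ENNReal.ofReal (Real.exp (-L)) := by
  set t := √((2 * log p + 2 * L) / n)
  have hn' : (0 : ℝ) < n := Nat.cast_pos.2 hn
  set v : ℝ≥0 := ⟨n * σ ^ 2, by positivity⟩
  have hv : v ≠ 0 := by
    rw [← NNReal.coe_ne_zero]
    exact (mul_pos hn' (pow_pos hσ 2)).ne'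
  have hcoord (ω : Ω) (j : Fin p) : (Xᵀ *ᵥ ε ω) j = ∑ i, X i j * ε ω i := by
    simp [mulVec, dotProduct]
  have hlaw (j : Fin p) : Measure.map (fun ω ↦ (Xᵀ *ᵥ ε ω) j) ℙ = gaussianReal 0 v := by
    have hvar : ∑ i, NNReal.mk (X i j ^ 2) (sq_nonneg _) * ⟨σ ^ 2, sq_nonneg σ⟩ = v := by
      apply NNReal.eq
      rw [NNReal.coe_sum]
      change ∑ i, X i j ^ 2 * σ ^ 2 = n * σ ^ 2
      rw [← Finset.sum_mul, hX j]
    simp only [hcoord]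
    rw [hindep.map_sum_mul_eq_gaussianReal hmeas hgauss, hvar]
  have hexponent : (t * (n * σ)) ^ 2 / (2 * v) = log p + L := by
    rw [show (v : ℝ) = n * σ ^ 2 from rfl, mul_pow, sq_sqrt (by positivity)]
    field_simp
  have hset : {ω | t < linf (Xᵀ *ᵥ ε ω) / (n * σ)} = {ω | t * (n * σ) < linf (Xᵀ *ᵥ ε ω)} := by
    ext
    simp [lt_div_iff₀ (by positivity : (0 : ℝ) < n * σ)]
  calc ℙ {ω | t < linf (Xᵀ *ᵥ ε ω) / (n * σ)}
      ≤ p * ENNReal.ofReal (exp (-((t * (n * σ)) ^ 2 / (2 * v)))) :=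
        hset ▸ measure_lt_linf_le (fun j ↦ by simp only [hcoord]; fun_prop) hv hlaw (by positivity)
    _ = ENNReal.ofReal (p * exp (-(log p + L))) := by
        rw [hexponent, ENNReal.ofReal_mul (by positivity), ENNReal.ofReal_natCast]
    _ ≤ ENNReal.ofReal (exp (-L)) := ENNReal.ofReal_le_ofReal (natCast_mul_exp_neg_log_add_le p L)
end
end

section
/- Suppose y = Xβ* + ε with β* ∈ ℝᵖ and ε ∈ ℝⁿ. Then for any β̂ ∈ ℝᵖ, the quantity σ̂² = (1/n)·‖y − Xβ̂‖₂² satisfies |σ̂² − (1/n)·‖ε‖₂²| ≤ (1/n)·‖Xβ̂ − Xβ*‖₂² + (2/n)·‖Xᵀε‖_∞·(‖β*‖₁ + ‖β̂‖₁). -/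
open MeasureTheory ProbabilityTheory Matrix
open scoped ENNReal

noncomputable section

/-- basic deterministic inequality for a naive variance estimator based
on any β̂. -/
theorem naive_estimator_basic_inequality {n p : ℕ} (hn : 0 < n)
    (X : Matrix (Fin n) (Fin p) ℝ) (βstar : Fin p → ℝ) (ε : Fin n → ℝ)
    (y : Fin n → ℝ) (hy : y = X.mulVec βstar + ε)
    (βhat : Fin p → ℝ) :
    |(1/n) * l2sq (y - X.mulVec βhat) - (1/n) * l2sq ε|
      ≤ (1/n) * l2sq (X.mulVec βhat - X.mulVec βstar)
        + (2/n) * linf (Xᵀ.mulVec ε) * (l1 βstar + l1 βhat) := by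
  set v : Fin n → ℝ := X.mulVec βhat - X.mulVec βstar with hv
  have hsub : y - X.mulVec βhat = ε - v := by
    subst hy; funext i; simp [hv]; ring
  set S : ℝ := ∑ i, v i * ε i with hS
  have hexp : l2sq (y - X.mulVec βhat) - l2sq ε = l2sq v - 2 * S := by
    rw [hsub]
    simp only [l2sq, hS, Finset.mul_sum, ← Finset.sum_sub_distrib]
    apply Finset.sum_congr rfl
    intro i _
    simp [Pi.sub_apply]; ring
  -- rewrite S via transpose
  have hS2 : S = ∑ j, (βhat j - βstar j) * (Xᵀ.mulVec ε) j := by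
    simp only [hS, hv, Pi.sub_apply, mulVec, dotProduct, transpose_apply,
      Finset.sum_mul, ← Finset.sum_sub_distrib, Finset.mul_sum]
    rw [Finset.sum_comm]
    apply Finset.sum_congr rfl
    intro i _
    apply Finset.sum_congr rfl
    intro j _
    ring
  have hlinf_nonneg : 0 ≤ linf (Xᵀ.mulVec ε) :=
    Real.iSup_nonneg fun j => abs_nonneg _
  have hle : ∀ j, |(Xᵀ.mulVec ε) j| ≤ linf (Xᵀ.mulVec ε) := by
    intro j
    exact le_ciSup (f := fun j => |(Xᵀ.mulVec ε) j|)
      (Set.Finite.bddAbove (Set.finite_range _)) j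
  have hSbound : |S| ≤ linf (Xᵀ.mulVec ε) * (l1 βstar + l1 βhat) := by
    rw [hS2]
    calc |∑ j, (βhat j - βstar j) * (Xᵀ.mulVec ε) j|
        ≤ ∑ j, |(βhat j - βstar j) * (Xᵀ.mulVec ε) j| :=
          Finset.abs_sum_le_sum_abs _ _
      _ ≤ ∑ j, (|βstar j| + |βhat j|) * linf (Xᵀ.mulVec ε) := by
          apply Finset.sum_le_sum
          intro j _
          rw [abs_mul]
          apply mul_le_mul _ (hle j) (abs_nonneg _)
            (by positivity)
          calc |βhat j - βstar j| ≤ |βhat j| + |βstar j| := abs_sub _ _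
            _ = |βstar j| + |βhat j| := by ring
      _ = linf (Xᵀ.mulVec ε) * (l1 βstar + l1 βhat) := by
          simp only [l1, add_mul, Finset.sum_add_distrib, Finset.mul_sum, mul_add]
          congr 1 <;> (apply Finset.sum_congr rfl; intros; ring)
  have hl2v : 0 ≤ l2sq v := Finset.sum_nonneg fun i _ => sq_nonneg _
  have hinv : (0:ℝ) ≤ 1/n := by positivity
  have key : |l2sq v - 2 * S| ≤ l2sq v + 2 * (linf (Xᵀ.mulVec ε) * (l1 βstar + l1 βhat)) := by
    calc |l2sq v - 2 * S| ≤ |l2sq v| + |2 * S| := abs_sub _ _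
      _ = l2sq v + 2 * |S| := by rw [abs_of_nonneg hl2v, abs_mul, abs_two]
      _ ≤ l2sq v + 2 * (linf (Xᵀ.mulVec ε) * (l1 βstar + l1 βhat)) := by
          linarith [hSbound]
  have : |(1/n) * l2sq (y - X.mulVec βhat) - (1/n) * l2sq ε|
      = (1/n) * |l2sq v - 2 * S| := by
    rw [← mul_sub, abs_mul, abs_of_nonneg hinv, hexp]
  rw [this]
  have := mul_le_mul_of_nonneg_left key hinv
  calc (1/(n:ℝ)) * |l2sq v - 2 * S|
      ≤ (1/n) * (l2sq v + 2 * (linf (Xᵀ.mulVec ε) * (l1 βstar + l1 βhat))) := this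
    _ = (1/n) * l2sq v + (2/n) * linf (Xᵀ.mulVec ε) * (l1 βstar + l1 βhat) := by
        ring
end
end
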